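/- arXiv:2202.02224 — 2 statements merged into one kernel-verified Lean document; each statement's English description precedes it below -/
import Mathlib

section
/- Let K be a real symmetric 3×3 matrix with pairwise distinct positive eigenvalues λ₁, λ₂, λ₃. Then for every c < 2·min{λ₁+λ₂, λ₁+λ₃, λ₂+λ₃} there exists a constant γ > 0 such that for every Q ∈ SO(3) with tr(K (I₃ − Q)) ≤ c, one has tr(K (I₃ − Q)) ≤ γ ‖K Q − Qᵀ K‖_F², where ‖·‖_F denotes the Frobenius norm. -/
/-!
Write `Φ = tr(K(I - Q))`, `t = tr Q`, `E = KQ - QᵀK` and `W = Q - Qᵀ`. For a rotation, Cayley–Hamilton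
reads `Q² = tQ - tI + Qᵀ`; with it, `⟪E, W⟫_F = 2(1 + t)Φ` and `‖W‖_F² = 2(1 + t)(3 - t)`, so
Cauchy–Schwarz gives `(2(1 + t)Φ)² ≤ ‖E‖_F² · 2(1 + t)(3 - t)`. In an eigenbasis of `K`,
`Φ = ∑ λᵢ(1 - Qᵢᵢ)`, and the numbers `1 - Qᵢᵢ` of a rotation satisfy the triangle inequalities; hence
`Φ ≥ m(3 - t)/2` with `m = min (λᵢ + λⱼ)`. On `Φ ≤ c < 2m` this forces `m(1 + t) ≥ 4m - 2c > 0`,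
and the two bounds combine to `Φ ≤ ‖E‖_F² / (4m - 2c)`.
-/

open Matrix

def frobSq (M : Matrix (Fin 3) (Fin 3) ℝ) : ℝ := ∑ i, ∑ j, (M i j) ^ 2

lemma adjugate_fin_three_eq {R : Type*} [CommRing R] (M : Matrix (Fin 3) (Fin 3) R) :
    M.adjugate = M * M - M.trace • M + M.adjugate.trace • 1 := by
  ext i j
  fin_cases i <;> fin_cases j <;>
    simp [adjugate_fin_three, mul_apply, trace, Fin.sum_univ_three, one_apply] <;> ring

lemma adjugate_eq_transpose_of_orthogonal {n R : Type*} [Fintype n] [DecidableEq n] [CommRing R]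
    {Q : Matrix n n R} (hQ : Qᵀ * Q = 1) (hdet : Q.det = 1) : Q.adjugate = Qᵀ :=
  calc Q.adjugate = Qᵀ * Q * Q.adjugate := by rw [hQ, Matrix.one_mul]
    _ = Qᵀ := by rw [Matrix.mul_assoc, mul_adjugate, hdet, one_smul, Matrix.mul_one]

lemma mul_self_eq_of_orthogonal {R : Type*} [CommRing R] {Q : Matrix (Fin 3) (Fin 3) R}
    (hQ : Qᵀ * Q = 1) (hdet : Q.det = 1) :
    Q * Q = Q.trace • Q - Q.trace • 1 + Qᵀ := by
  have h := adjugate_fin_three_eq Q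
  rw [adjugate_eq_transpose_of_orthogonal hQ hdet, trace_transpose] at h
  linear_combination (norm := abel) -h

lemma trace_transpose_mul_sub_transpose {R : Type*} [CommRing R]
    {K Q : Matrix (Fin 3) (Fin 3) R} (hK : Kᵀ = K) (hQ : Qᵀ * Q = 1) (hdet : Q.det = 1) :
    ((K * Q - Qᵀ * K)ᵀ * (Q - Qᵀ)).trace = 2 * (1 + Q.trace) * (K * (1 - Q)).trace := by
  have hQ' : Q * Qᵀ = 1 := mul_eq_one_comm.mp hQ
  have trace_mul_transpose (M : Matrix (Fin 3) (Fin 3) R) : (K * Mᵀ).trace = (K * M).trace := by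
    rw [← trace_transpose, transpose_mul, transpose_transpose, hK, trace_mul_comm]
  have expand : (K * Q - Qᵀ * K)ᵀ * (Q - Qᵀ)
      = Qᵀ * K * Q - Qᵀ * (K * Qᵀ) - K * (Q * Q) + K * (Q * Qᵀ) := by
    rw [transpose_sub, transpose_mul, transpose_mul, transpose_transpose, hK]
    noncomm_ring
  have h1 : (Qᵀ * K * Q).trace = K.trace := by
    rw [trace_mul_comm, ← Matrix.mul_assoc, hQ', Matrix.one_mul]
  have h2 : (Qᵀ * (K * Qᵀ)).trace = (K * (Q * Q)).trace := by
    rw [trace_mul_comm, Matrix.mul_assoc, ← transpose_mul, trace_mul_transpose]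
  have h3 : (K * (Q * Q)).trace = Q.trace * (K * Q).trace - Q.trace * K.trace + (K * Q).trace := by
    simp [mul_self_eq_of_orthogonal hQ hdet, Matrix.mul_add, Matrix.mul_sub, trace_mul_transpose]
  rw [expand, trace_add, trace_sub, trace_sub, h1, h2, h3, hQ', Matrix.mul_sub, trace_sub,
    Matrix.mul_one]
  ring

lemma trace_transpose_mul_eq_sum {m n R : Type*} [Fintype m] [Fintype n]
    [NonUnitalNonAssocSemiring R] (A B : Matrix m n R) :
    (Aᵀ * B).trace = ∑ i, ∑ j, A i j * B i j := by
  simp only [trace, diag, mul_apply, transpose_apply]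
  exact Finset.sum_comm

lemma frobSq_eq_trace (M : Matrix (Fin 3) (Fin 3) ℝ) : frobSq M = (Mᵀ * M).trace := by
  simp only [trace_transpose_mul_eq_sum, frobSq, sq]

lemma frobSq_nonneg (M : Matrix (Fin 3) (Fin 3) ℝ) : 0 ≤ frobSq M := by
  unfold frobSq; positivity

lemma sq_trace_transpose_mul_le (A B : Matrix (Fin 3) (Fin 3) ℝ) :
    (Aᵀ * B).trace ^ 2 ≤ frobSq A * frobSq B := by
  simp only [trace_transpose_mul_eq_sum, frobSq, ← Fintype.sum_prod_type']
  exact Finset.sum_mul_sq_le_sq_mul_sq _ _ _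

lemma sq_mul_trace_le_frobSq_mul {K Q : Matrix (Fin 3) (Fin 3) ℝ} (hK : Kᵀ = K)
    (hQ : Qᵀ * Q = 1) (hdet : Q.det = 1) :
    (2 * (1 + Q.trace) * (K * (1 - Q)).trace) ^ 2
      ≤ frobSq (K * Q - Qᵀ * K) * (2 * (1 + Q.trace) * (3 - Q.trace)) := by
  have hskew : frobSq (Q - Qᵀ) = 2 * (1 + Q.trace) * (3 - Q.trace) := by
    have h := trace_transpose_mul_sub_transpose (K := 1) (transpose_one) hQ hdet
    simp only [Matrix.one_mul, Matrix.mul_one, trace_sub, trace_one, Fintype.card_fin] at h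
    rw [frobSq_eq_trace, h]
    norm_num
  rw [← hskew, ← trace_transpose_mul_sub_transpose hK hQ hdet]
  exact sq_trace_transpose_mul_le _ _

/-- `(a, r, s)` and `(p, b, u)` are two columns of a rotation, written in the coordinate order
`i, j, k`; then `a * b - p * r` is its `(k, k)` entry. -/
lemma add_le_one_add_of_orthonormal {a b p r s u : ℝ}
    (hu : a ^ 2 + r ^ 2 + s ^ 2 = 1) (hv : p ^ 2 + b ^ 2 + u ^ 2 = 1)
    (huv : a * p + r * b + s * u = 0) :
    a + b ≤ 1 + (a * b - p * r) := by
  -- Lagrange's identity for the vectors `e₀ - (a, r, s)` and `e₁ - (p, b, u)`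
  have lagrange : (2 - 2 * a) * (2 - 2 * b) - (p + r) ^ 2
      = (r * u + s * (1 - b)) ^ 2 + (s * p + (1 - a) * u) ^ 2
        + ((1 - a) * (1 - b) - r * p) ^ 2 := by
    linear_combination (-(2 - 2 * b)) * hu + (-((1 - a) ^ 2 + r ^ 2 + s ^ 2)) * hv
      + (-(1 - a) * p - r * (1 - b) + s * u - (p + r)) * huv
  nlinarith [sq_nonneg (p - r), sq_nonneg (r * u + s * (1 - b)), sq_nonneg (s * p + (1 - a) * u),
    sq_nonneg ((1 - a) * (1 - b) - r * p)]

lemma diag_add_diag_le_of_orthogonal {Q : Matrix (Fin 3) (Fin 3) ℝ} (hQ : Qᵀ * Q = 1)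
    (hdet : Q.det = 1) :
    Q 1 1 + Q 2 2 ≤ 1 + Q 0 0 ∧ Q 0 0 + Q 2 2 ≤ 1 + Q 1 1 ∧ Q 0 0 + Q 1 1 ≤ 1 + Q 2 2 := by
  have hadj := adjugate_eq_transpose_of_orthogonal hQ hdet
  rw [← Matrix.ext_iff] at hQ hadj
  simp only [mul_apply, transpose_apply, Fin.sum_univ_three, Fin.isValue, one_apply,
    Fin.forall_fin_succ, Fin.succ_zero_eq_one, Fin.succ_one_eq_two, IsEmpty.forall_iff, and_true,
    ↓reduceIte, zero_ne_one, Fin.reduceEq, Fin.succ_ne_zero, adjugate_fin_three, of_apply,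
    cons_val', cons_val_fin_one, cons_val_zero, cons_val_succ] at hQ hadj
  obtain ⟨⟨c₀₀, -, -⟩, ⟨c₁₀, c₁₁, -⟩, c₂₀, c₂₁, c₂₂⟩ := hQ
  obtain ⟨⟨d₀, -, -⟩, ⟨-, d₁, -⟩, -, -, d₂⟩ := hadj
  refine ⟨?_, ?_, ?_⟩
  · linarith [add_le_one_add_of_orthonormal (a := Q 1 1) (b := Q 2 2) (p := Q 1 2) (r := Q 2 1)
      (s := Q 0 1) (u := Q 0 2) (by linear_combination c₁₁) (by linear_combination c₂₂)
      (by linear_combination c₂₁)]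
  · linarith [add_le_one_add_of_orthonormal (a := Q 0 0) (b := Q 2 2) (p := Q 0 2) (r := Q 2 0)
      (s := Q 1 0) (u := Q 1 2) (by linear_combination c₀₀) (by linear_combination c₂₂)
      (by linear_combination c₂₀)]
  · linarith [add_le_one_add_of_orthonormal (a := Q 0 0) (b := Q 1 1) (p := Q 0 1) (r := Q 1 0)
      (s := Q 2 0) (u := Q 2 1) (by linear_combination c₀₀) (by linear_combination c₁₁)
      (by linear_combination c₁₀)]

lemma half_mul_sum_le_of_triangle {l₀ l₁ l₂ m a₀ a₁ a₂ : ℝ} (h₀₁ : m ≤ l₀ + l₁)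
    (h₀₂ : m ≤ l₀ + l₂) (h₁₂ : m ≤ l₁ + l₂) (t₀ : a₀ ≤ a₁ + a₂) (t₁ : a₁ ≤ a₀ + a₂)
    (t₂ : a₂ ≤ a₀ + a₁) :
    m / 2 * (a₀ + a₁ + a₂) ≤ l₀ * a₀ + l₁ * a₁ + l₂ * a₂ := by
  nlinarith [mul_nonneg (sub_nonneg.2 t₀) (sub_nonneg.2 h₁₂),
    mul_nonneg (sub_nonneg.2 t₁) (sub_nonneg.2 h₀₂), mul_nonneg (sub_nonneg.2 t₂) (sub_nonneg.2 h₀₁)]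

lemma Matrix.IsHermitian.trace_mul_eq_sum_eigenvalues {n : Type*} [Fintype n] [DecidableEq n]
    {K : Matrix n n ℝ} (hK : K.IsHermitian) (M : Matrix n n ℝ) :
    (K * M).trace = ∑ i, hK.eigenvalues i
      * ((hK.eigenvectorUnitary : Matrix n n ℝ)ᵀ * M * hK.eigenvectorUnitary) i i := by
  conv_lhs => rw [hK.spectral_theorem, Unitary.conjStarAlgAut_apply, Matrix.mul_assoc,
    Matrix.mul_assoc, trace_mul_comm, Matrix.mul_assoc]
  simp [trace, diagonal_mul, star_eq_conjTranspose, conjTranspose_eq_transpose_of_trivial]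

lemma transpose_mul_mul_orthogonal {n : Type*} [Fintype n] [DecidableEq n]
    {Q U : Matrix n n ℝ} (hQ : Qᵀ * Q = 1) (hdet : Q.det = 1) (hU : Uᵀ * U = 1) :
    (Uᵀ * Q * U)ᵀ * (Uᵀ * Q * U) = 1 ∧ (Uᵀ * Q * U).det = 1 := by
  have hU' : U * Uᵀ = 1 := mul_eq_one_comm.mp hU
  constructor
  · calc (Uᵀ * Q * U)ᵀ * (Uᵀ * Q * U) = Uᵀ * (Qᵀ * (U * Uᵀ) * Q) * U := by
          simp only [transpose_mul, transpose_transpose, Matrix.mul_assoc]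
      _ = 1 := by rw [hU', Matrix.mul_one, hQ, Matrix.mul_one, hU]
  · rw [det_mul, det_mul, hdet, mul_one, ← det_mul, hU, det_one]

lemma mul_three_sub_trace_le {K : Matrix (Fin 3) (Fin 3) ℝ} (hK : K.IsHermitian) {m : ℝ}
    (h₀₁ : m ≤ hK.eigenvalues 0 + hK.eigenvalues 1) (h₀₂ : m ≤ hK.eigenvalues 0 + hK.eigenvalues 2)
    (h₁₂ : m ≤ hK.eigenvalues 1 + hK.eigenvalues 2) {Q : Matrix (Fin 3) (Fin 3) ℝ}
    (hQ : Qᵀ * Q = 1) (hdet : Q.det = 1) :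
    m * (3 - Q.trace) ≤ 2 * (K * (1 - Q)).trace := by
  set U : Matrix (Fin 3) (Fin 3) ℝ := ↑hK.eigenvectorUnitary
  have hU : Uᵀ * U = 1 := by
    simpa [star_eq_conjTranspose, conjTranspose_eq_transpose_of_trivial]
      using Unitary.coe_star_mul_self hK.eigenvectorUnitary
  set Q' := Uᵀ * Q * U
  obtain ⟨hQ', hdet'⟩ := transpose_mul_mul_orthogonal hQ hdet hU
  have htrace : Q.trace = Q' 0 0 + Q' 1 1 + Q' 2 2 := by
    rw [← trace_fin_three, trace_mul_cycle, mul_eq_one_comm.mp hU, Matrix.one_mul]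
  have hΦ : (K * (1 - Q)).trace = hK.eigenvalues 0 * (1 - Q' 0 0)
      + hK.eigenvalues 1 * (1 - Q' 1 1) + hK.eigenvalues 2 * (1 - Q' 2 2) := by
    rw [hK.trace_mul_eq_sum_eigenvalues, Fin.sum_univ_three, Matrix.mul_sub, Matrix.sub_mul,
      Matrix.mul_one, hU]
    simp [Q', U]
  obtain ⟨t₀, t₁, t₂⟩ := diag_add_diag_le_of_orthogonal hQ' hdet'
  have := half_mul_sum_le_of_triangle h₀₁ h₀₂ h₁₂ (a₀ := 1 - Q' 0 0) (a₁ := 1 - Q' 1 1)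
    (a₂ := 1 - Q' 2 2) (by linarith) (by linarith) (by linarith)
  rw [hΦ, htrace]
  linarith

lemma le_inv_mul_of_sq_le_of_mul_le {m c Φ t F : ℝ} (hm : 0 < m) (hc : c < 2 * m) (hΦc : Φ ≤ c)
    (hF : 0 ≤ F) (hlow : m * (3 - t) ≤ 2 * Φ)
    (hsq : (2 * (1 + t) * Φ) ^ 2 ≤ F * (2 * (1 + t) * (3 - t))) :
    Φ ≤ (4 * m - 2 * c)⁻¹ * F := by
  have hγ : 0 < 4 * m - 2 * c := by linarith
  rcases le_or_gt Φ 0 with hΦ | hΦ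
  · exact hΦ.trans (by positivity)
  have ht : 4 * m - 2 * c ≤ m * (1 + t) := by linarith
  have ht' : 0 < 1 + t := pos_of_mul_pos_right (hγ.trans_le ht) hm.le
  have h1 : 2 * (1 + t) * Φ ^ 2 ≤ F * (3 - t) := by nlinarith
  have h2 : m * (1 + t) * Φ ≤ F := by nlinarith
  rw [inv_mul_eq_div, le_div_iff₀ hγ]
  nlinarith

theorem error_vector_upper_bound_general
    (K : Matrix (Fin 3) (Fin 3) ℝ) (hK : K.IsHermitian)
    (hpos : ∀ i, 0 < hK.eigenvalues i) :
    ∀ c : ℝ,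
      c < 2 * min (hK.eigenvalues 0 + hK.eigenvalues 1)
            (min (hK.eigenvalues 0 + hK.eigenvalues 2)
              (hK.eigenvalues 1 + hK.eigenvalues 2)) →
      ∃ γ : ℝ, 0 < γ ∧
        ∀ Q : Matrix (Fin 3) (Fin 3) ℝ, Qᵀ * Q = 1 → Q.det = 1 →
          (K * (1 - Q)).trace ≤ c →
          (K * (1 - Q)).trace ≤ γ * frobSq (K * Q - Qᵀ * K) := by
  intro c hc
  set m := min (hK.eigenvalues 0 + hK.eigenvalues 1)
    (min (hK.eigenvalues 0 + hK.eigenvalues 2) (hK.eigenvalues 1 + hK.eigenvalues 2))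
  have hm : 0 < m := lt_min (add_pos (hpos 0) (hpos 1))
    (lt_min (add_pos (hpos 0) (hpos 2)) (add_pos (hpos 1) (hpos 2)))
  refine ⟨(4 * m - 2 * c)⁻¹, inv_pos.2 (by linarith), fun Q hQ hdet hΦc ↦ ?_⟩
  have hlow := mul_three_sub_trace_le hK (m := m) (min_le_left _ _)
    ((min_le_right _ _).trans (min_le_left _ _)) ((min_le_right _ _).trans (min_le_right _ _))
    hQ hdet
  exact le_inv_mul_of_sq_le_of_mul_le hm hc hΦc (frobSq_nonneg _) hlow
    (sq_mul_trace_le_frobSq_mul (isHermitian_iff_isSymm.mp hK).eq hQ hdet)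

/-- If the symmetric matrix `K` has pairwise distinct positive eigenvalues
`λ₁, λ₂, λ₃`, then for every `c < 2 min{λ₁+λ₂, λ₁+λ₃, λ₂+λ₃}` there is `γ > 0` such that
`tr(K(I₃ − Q)) ≤ γ ‖K Q − Qᵀ K‖_F²` for every `Q ∈ SO(3)` with `tr(K(I₃ − Q)) ≤ c`. -/
theorem error_vector_upper_bound
    (K : Matrix (Fin 3) (Fin 3) ℝ) (hK : K.IsHermitian)
    (hpos : ∀ i, 0 < hK.eigenvalues i)
    (hdist : Function.Injective hK.eigenvalues) :
    ∀ c : ℝ,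
      c < 2 * min (hK.eigenvalues 0 + hK.eigenvalues 1)
            (min (hK.eigenvalues 0 + hK.eigenvalues 2)
              (hK.eigenvalues 1 + hK.eigenvalues 2)) →
      ∃ γ : ℝ, 0 < γ ∧
        ∀ Q : Matrix (Fin 3) (Fin 3) ℝ, Qᵀ * Q = 1 → Q.det = 1 →
          (K * (1 - Q)).trace ≤ c →
          (K * (1 - Q)).trace ≤ γ * frobSq (K * Q - Qᵀ * K) :=
  error_vector_upper_bound_general K hK hpos
end

section
/- Let a₁, …, a_m ∈ ℝ³ be constant unit vectors, k₁, …, k_m > 0, k_ω > 0, k_V ≥ 0, let ω : ℝ → ℝ³ and b₁, …, b_m : ℝ → ℝ³ be differentiable with ‖b_j(t)‖ = 1 for all t, and suppose the closed-loop dynamics b_j′(t) = b_j(t) × ω(t) and ω′(t) = −k_ω ω(t) − e(t) hold, where e(t) = Σ_{j=1}^m k_j (a_j × b_j(t)). Define V(t) = Σ_{j=1}^m k_j (1 + a_j · b_j(t)) + ½‖ω(t)‖² + k_V (e(t) · ω(t)). Then V is differentiable and for all t, V′(t) ≤ −(k_ω − k_V Σ_{j=1}^m k_j) ‖ω(t)‖²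 − k_V ‖e(t)‖² + k_V k_ω ‖e(t)‖ ‖ω(t)‖. -/
/-!
Differentiating `V` along the dynamics, the triple product identity
`⟪a, b × ω⟫ = ⟪a × b, ω⟫` makes the potential term contribute exactly `⟪e, ω⟫`, which cancels
the `-⟪ω, e⟫` coming from `½‖ω‖²`. What is left is
`-k_ω ‖ω‖² + k_V (-k_ω ⟪e, ω⟫ - ‖e‖² + ⟪e', ω⟫)` with `e' = ∑ k_j a_j × (b_j × ω)`, and
Cauchy–Schwarz together with `‖x × y‖ ≤ ‖x‖ ‖y‖` and `‖a_j‖ = ‖b_j‖ = 1` bounds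
`⟪e', ω⟫ ≤ (∑ k_j) ‖ω‖²` and `-⟪e, ω⟫ ≤ ‖e‖ ‖ω‖`.
-/

open Matrix

/-- The cross product on `ℝ³` with the Euclidean structure. -/
noncomputable def cross3 (x y : EuclideanSpace ℝ (Fin 3)) : EuclideanSpace ℝ (Fin 3) :=
  (WithLp.equiv 2 (Fin 3 → ℝ)).symm
    (crossProduct ((WithLp.equiv 2 (Fin 3 → ℝ)) x) ((WithLp.equiv 2 (Fin 3 → ℝ)) y))

local notation "E³" => EuclideanSpace ℝ (Fin 3)

section CrossProduct

lemma inner_eq_dotProduct (x y : E³) :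
    (inner ℝ x y : ℝ) = (WithLp.equiv 2 (Fin 3 → ℝ) x) ⬝ᵥ (WithLp.equiv 2 (Fin 3 → ℝ) y) := by
  simp [PiLp.inner_apply, dotProduct, mul_comm]

lemma inner_cross3_right (x y z : E³) :
    (inner ℝ x (cross3 y z) : ℝ) = inner ℝ (cross3 x y) z := by
  simp only [inner_eq_dotProduct, cross3, Equiv.apply_symm_apply]
  rw [triple_product_permutation, triple_product_permutation, dotProduct_comm]

lemma norm_cross3_sq (x y : E³) :
    ‖cross3 x y‖ ^ 2 = ‖x‖ ^ 2 * ‖y‖ ^ 2 - (inner ℝ x y : ℝ) ^ 2 := by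
  simp only [← real_inner_self_eq_norm_sq, inner_eq_dotProduct, cross3, Equiv.apply_symm_apply]
  rw [cross_dot_cross, dotProduct_comm (WithLp.equiv 2 _ y) (WithLp.equiv 2 _ x)]
  ring

lemma norm_cross3_le (x y : E³) : ‖cross3 x y‖ ≤ ‖x‖ * ‖y‖ := by
  refine le_of_sq_le_sq ?_ (by positivity)
  rw [norm_cross3_sq, mul_pow]
  linarith [sq_nonneg (inner ℝ x y : ℝ)]

theorem HasDerivAt.const_cross3 (a : E³) {f : ℝ → E³} {f' : E³} {t : ℝ}
    (hf : HasDerivAt f f' t) : HasDerivAt (fun s => cross3 a (f s)) (cross3 a f') t :=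
  let L : E³ →L[ℝ] E³ := LinearMap.toContinuousLinearMap
    (((WithLp.linearEquiv 2 ℝ (Fin 3 → ℝ)).symm.toLinearMap.comp
        (crossProduct ((WithLp.equiv 2 (Fin 3 → ℝ)) a))).comp
      (WithLp.linearEquiv 2 ℝ (Fin 3 → ℝ)).toLinearMap)
  L.hasFDerivAt.comp_hasDerivAt t hf

end CrossProduct

section Alignment

variable {m : ℕ} (k : Fin m → ℝ) (a : Fin m → E³)

theorem hasDerivAt_sum_smul_cross3 {b : Fin m → ℝ → E³} {b' : Fin m → E³} {t : ℝ}
    (hb : ∀ j, HasDerivAt (b j) (b' j) t) :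
    HasDerivAt (fun s => ∑ j, k j • cross3 (a j) (b j s)) (∑ j, k j • cross3 (a j) (b' j)) t :=
  HasDerivAt.fun_sum fun j _ => ((hb j).const_cross3 (a j)).const_smul (k j)

theorem hasDerivAt_alignment_potential {b : Fin m → ℝ → E³} (w : E³) {t : ℝ}
    (hb : ∀ j, HasDerivAt (b j) (cross3 (b j t) w) t) :
    HasDerivAt (fun s => ∑ j, k j * (1 + inner ℝ (a j) (b j s) : ℝ))
      (inner ℝ (∑ j, k j • cross3 (a j) (b j t)) w) t := by
  have h := HasDerivAt.fun_sum (u := Finset.univ) fun j _ =>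
    (((hasDerivAt_const t (a j)).inner ℝ (hb j)).const_add 1).const_mul (k j)
  refine h.congr_deriv ?_
  simp [sum_inner, real_inner_smul_left, inner_cross3_right]

lemma norm_sum_smul_cross3_cross3_le (hk : ∀ j, 0 ≤ k j) (ha : ∀ j, ‖a j‖ = 1)
    {b : Fin m → E³} (hb : ∀ j, ‖b j‖ = 1) (w : E³) :
    ‖∑ j, k j • cross3 (a j) (cross3 (b j) w)‖ ≤ (∑ j, k j) * ‖w‖ := by
  rw [Finset.sum_mul]
  refine (norm_sum_le _ _).trans (Finset.sum_le_sum fun j _ => ?_)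
  rw [norm_smul, Real.norm_of_nonneg (hk j)]
  refine mul_le_mul_of_nonneg_left ?_ (hk j)
  calc ‖cross3 (a j) (cross3 (b j) w)‖ ≤ ‖a j‖ * (‖b j‖ * ‖w‖) :=
        (norm_cross3_le _ _).trans (by gcongr; exact norm_cross3_le _ _)
    _ = ‖w‖ := by rw [ha j, hb j, one_mul, one_mul]

end Alignment

/-- Lyapunov decrease inequality for the unforced closed-loop attitude
alignment dynamics `b_j′ = b_j × ω`, `ω′ = −k_ω ω − e`, with
`e = ∑ j, k j (a j × b j)` and
`V = ∑ j, k j (1 + a j · b j) + ½‖ω‖² + k_V (e · ω)`. -/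
theorem lyapunov_decrease_unforced
    (m : ℕ) (a : Fin m → EuclideanSpace ℝ (Fin 3)) (ha : ∀ j, ‖a j‖ = 1)
    (k : Fin m → ℝ) (hk : ∀ j, 0 < k j)
    (kω kV : ℝ) (hkω : 0 < kω) (hkV : 0 ≤ kV)
    (ω : ℝ → EuclideanSpace ℝ (Fin 3))
    (b : Fin m → ℝ → EuclideanSpace ℝ (Fin 3))
    (hbunit : ∀ j t, ‖b j t‖ = 1)
    (e : ℝ → EuclideanSpace ℝ (Fin 3))
    (he : ∀ t, e t = ∑ j, k j • cross3 (a j) (b j t))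
    (hb : ∀ j t, HasDerivAt (b j) (cross3 (b j t) (ω t)) t)
    (hω : ∀ t, HasDerivAt ω (-(kω • ω t) - e t) t)
    (V : ℝ → ℝ)
    (hV : ∀ t, V t = ∑ j, k j * (1 + inner ℝ (a j) (b j t) : ℝ)
        + 1 / 2 * ‖ω t‖ ^ 2 + kV * (inner ℝ (e t) (ω t) : ℝ)) :
    Differentiable ℝ V ∧
    ∀ t : ℝ, deriv V t ≤ -(kω - kV * ∑ j, k j) * ‖ω t‖ ^ 2
        - kV * ‖e t‖ ^ 2 + kV * kω * ‖e t‖ * ‖ω t‖ := by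
  set e' : ℝ → E³ := fun t => ∑ j, k j • cross3 (a j) (cross3 (b j t) (ω t))
  have he' : ∀ t, HasDerivAt e (e' t) t := fun t => by
    rw [funext he]; exact hasDerivAt_sum_smul_cross3 k a fun j => hb j t
  have hV' : ∀ t, HasDerivAt V (inner ℝ (e t) (ω t)
      + 1 / 2 * (2 * inner ℝ (ω t) (-(kω • ω t) - e t))
      + kV * (inner ℝ (e t) (-(kω • ω t) - e t) + inner ℝ (e' t) (ω t))) t := fun t => by
    have hpot := hasDerivAt_alignment_potential k a (ω t) fun j => hb j t
    rw [← he t] at hpot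
    rw [funext hV]
    exact (hpot.add ((hω t).norm_sq.const_mul _)).add (((he' t).inner ℝ (hω t)).const_mul kV)
  refine ⟨fun t => (hV' t).differentiableAt, fun t => ?_⟩
  have he'_le : inner ℝ (e' t) (ω t) ≤ (∑ j, k j) * ‖ω t‖ ^ 2 :=
    calc inner ℝ (e' t) (ω t) ≤ ‖e' t‖ * ‖ω t‖ := real_inner_le_norm _ _
      _ ≤ (∑ j, k j) * ‖ω t‖ * ‖ω t‖ := by
        gcongr
        exact norm_sum_smul_cross3_cross3_le k a (fun j => (hk j).le) ha (hbunit · t) (ω t)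
      _ = (∑ j, k j) * ‖ω t‖ ^ 2 := by ring
  have he_ge : -inner ℝ (e t) (ω t) ≤ ‖e t‖ * ‖ω t‖ :=
    neg_le.mpr (neg_le_of_abs_le (abs_real_inner_le_norm _ _))
  rw [(hV' t).deriv]
  simp only [inner_sub_right, inner_neg_right, real_inner_smul_right, real_inner_self_eq_norm_sq,
    real_inner_comm (e t) (ω t)]
  nlinarith [mul_le_mul_of_nonneg_left he'_le hkV,
    mul_le_mul_of_nonneg_left he_ge (mul_nonneg hkV hkω.le)]
end
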